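/- arXiv:1709.05747 — 5 statements merged into one kernel-verified Lean document; each statement's English description precedes it below -/
import Mathlib

section
/- Let h : ℝⁿ → ℝ be L-smooth and σ-hypoconvex with -L < σ ≤ 0. Then for all x, y ∈ ℝⁿ: h(y) ≥ h(x) + ⟨∇h(x), y - x⟩ + (σL/(2(L+σ)))‖y-x‖² + (1/(2(L+σ)))‖∇h(y) - ∇h(x)‖². -/
/-!
Set `g := h - (σ/2)‖·‖²`: it is convex and its gradient `∇h - σ • id` is `(L - σ)`-Lipschitz.
For a convex `g` with `M`-Lipschitz gradient, bounding `g` at the gradient step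
`z = y - (∇g y - ∇g x)/M` from below by convexity at `x` and from above by the descent lemma
at `y` gives `g y ≥ g x + ⟪∇g x, y - x⟫ + ‖∇g y - ∇g x‖²/(2M)`, and adding this to its mirror
image gives cocoercivity `‖∇g y - ∇g x‖² ≤ M ⟪∇g y - ∇g x, y - x⟫`.
Written in terms of `h`, the first bound exceeds the claimed one by
`-σ (M ⟪Δ, y - x⟫ - ‖Δ‖²) / (M (L + σ))` with `Δ = ∇g y - ∇g x` and `M = L - σ`,
which is nonnegative by cocoercivity.
-/

open Set RealInnerProductSpace

theorem norm_sub_smul_sub_le_of_lipschitz {F : Type*} [NormedAddCommGroup F] [NormedSpace ℝ F]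
    {G : F → F} {L σ : ℝ} (hσ : σ ≤ 0) (hL : ∀ x y, ‖G x - G y‖ ≤ L * ‖x - y‖) (x y : F) :
    ‖(G x - σ • x) - (G y - σ • y)‖ ≤ (L - σ) * ‖x - y‖ :=
  calc ‖(G x - σ • x) - (G y - σ • y)‖ = ‖(G x - G y) + (-σ) • (x - y)‖ := by congr 1; module
    _ ≤ ‖G x - G y‖ + ‖(-σ) • (x - y)‖ := norm_add_le _ _
    _ ≤ L * ‖x - y‖ + (-σ) * ‖x - y‖ := by
        rw [norm_smul, Real.norm_of_nonneg (neg_nonneg.2 hσ)]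
        gcongr
        exact hL x y
    _ = (L - σ) * ‖x - y‖ := by ring

variable {E : Type*} [NormedAddCommGroup E] [InnerProductSpace ℝ E]

theorem quadratic_le_of_cocoercive {L σ : ℝ} (hσ1 : -L < σ) (hσ2 : σ ≤ 0) {Δ d : E}
    (hΔ : (L - σ)⁻¹ * ‖Δ‖ ^ 2 ≤ ⟪Δ, d⟫) :
    σ * L / (2 * (L + σ)) * ‖d‖ ^ 2 + 1 / (2 * (L + σ)) * ‖Δ + σ • d‖ ^ 2
      ≤ σ / 2 * ‖d‖ ^ 2 + 1 / (2 * (L - σ)) * ‖Δ‖ ^ 2 := by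
  have hM : 0 < L - σ := by linarith
  have hLσ : 0 < L + σ := by linarith
  rw [inv_mul_le_iff₀ hM] at hΔ
  have hexpand : ‖Δ + σ • d‖ ^ 2 = ‖Δ‖ ^ 2 + 2 * σ * ⟪Δ, d⟫ + σ ^ 2 * ‖d‖ ^ 2 := by
    rw [norm_add_sq_real, real_inner_smul_right, norm_smul, Real.norm_eq_abs, mul_pow, sq_abs]
    ring
  have hgap : σ / 2 * ‖d‖ ^ 2 + 1 / (2 * (L - σ)) * ‖Δ‖ ^ 2
      - (σ * L / (2 * (L + σ)) * ‖d‖ ^ 2 + 1 / (2 * (L + σ)) * ‖Δ + σ • d‖ ^ 2)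
      = -σ * ((L - σ) * ⟪Δ, d⟫ - ‖Δ‖ ^ 2) / ((L - σ) * (L + σ)) := by
    rw [hexpand]
    field_simp
    ring
  have hgap_nonneg : 0 ≤ -σ * ((L - σ) * ⟪Δ, d⟫ - ‖Δ‖ ^ 2) / ((L - σ) * (L + σ)) :=
    div_nonneg (mul_nonneg (by linarith) (by linarith)) (by positivity)
  linarith

variable [CompleteSpace E] {f : E → ℝ}

theorem HasGradientAt.hasDerivAt_comp_line {g a d : E} {t : ℝ}
    (hf : HasGradientAt f g (a + t • d)) :
    HasDerivAt (fun s : ℝ => f (a + s • d)) ⟪g, d⟫ t := by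
  have hline : HasDerivAt (fun s : ℝ => a + s • d) d t := by
    simpa using ((hasDerivAt_id t).smul_const d).const_add a
  simpa [Function.comp_def] using (hasGradientAt_iff_hasFDerivAt.mp hf).comp_hasDerivAt t hline

theorem HasGradientAt.sub_half_mul_norm_sq {g x : E} (hf : HasGradientAt f g x) (c : ℝ) :
    HasGradientAt (fun y => f y - c / 2 * ‖y‖ ^ 2) (g - c • x) x := by
  have hq : HasFDerivAt (fun y : E => c / 2 * ‖y‖ ^ 2)
      (InnerProductSpace.toDual ℝ E (c • x)) x := by
    refine ((hasStrictFDerivAt_norm_sq x).hasFDerivAt.const_mul (c / 2)).congr_fderiv ?_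
    ext w
    simp only [smul_apply, innerSL_apply_apply,
      nsmul_eq_mul, Nat.cast_ofNat, smul_eq_mul, map_smul, InnerProductSpace.toDual_apply_apply]
    ring
  rw [hasGradientAt_iff_hasFDerivAt, map_sub]
  exact (hasGradientAt_iff_hasFDerivAt.mp hf).sub hq

theorem le_add_inner_gradient_add_sq_norm_of_lipschitz {M : ℝ} (hf : Differentiable ℝ f)
    (hL : ∀ x y, ‖gradient f x - gradient f y‖ ≤ M * ‖x - y‖) (a b : E) :
    f b ≤ f a + ⟪gradient f a, b - a⟫ + M / 2 * ‖b - a‖ ^ 2 := by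
  set d := b - a
  let φ : ℝ → ℝ := fun t => f (a + t • d) - t * ⟪gradient f a, d⟫ - M / 2 * ‖d‖ ^ 2 * t ^ 2
  have hφ : ∀ t, HasDerivAt φ
      (⟪gradient f (a + t • d), d⟫ - ⟪gradient f a, d⟫ - M * ‖d‖ ^ 2 * t) t := by
    intro t
    refine ((((hf _).hasGradientAt.hasDerivAt_comp_line (a := a) (d := d)).sub
      ((hasDerivAt_id t).mul_const ⟪gradient f a, d⟫)).sub
      ((hasDerivAt_pow 2 t).const_mul (M / 2 * ‖d‖ ^ 2))).congr_deriv ?_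
    norm_num
    ring
  have hφ_nonpos : ∀ t ∈ interior (Ici (0 : ℝ)),
      ⟪gradient f (a + t • d), d⟫ - ⟪gradient f a, d⟫ - M * ‖d‖ ^ 2 * t ≤ 0 := by
    intro t ht
    rw [interior_Ici, mem_Ioi] at ht
    have hgrad : ‖gradient f (a + t • d) - gradient f a‖ ≤ M * (t * ‖d‖) := by
      simpa [norm_smul, abs_of_pos ht] using hL (a + t • d) a
    rw [sub_nonpos]
    calc ⟪gradient f (a + t • d), d⟫ - ⟪gradient f a, d⟫
        = ⟪gradient f (a + t • d) - gradient f a, d⟫ := (inner_sub_left _ _ _).symm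
      _ ≤ ‖gradient f (a + t • d) - gradient f a‖ * ‖d‖ := real_inner_le_norm _ _
      _ ≤ M * (t * ‖d‖) * ‖d‖ := by gcongr
      _ = M * ‖d‖ ^ 2 * t := by ring
  have hanti : AntitoneOn φ (Ici 0) :=
    antitoneOn_of_hasDerivWithinAt_nonpos (convex_Ici 0)
      (fun t _ => (hφ t).continuousAt.continuousWithinAt)
      (fun t _ => (hφ t).hasDerivWithinAt) hφ_nonpos
  have hφ01 := hanti (mem_Ici.2 le_rfl) (mem_Ici.2 zero_le_one) zero_le_one
  simp only [φ, one_smul, zero_smul, add_zero, d, add_sub_cancel] at hφ01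
  linarith

theorem ConvexOn.add_inner_gradient_le (hc : ConvexOn ℝ univ f) {a : E}
    (hf : DifferentiableAt ℝ f a) (b : E) : f a + ⟪gradient f a, b - a⟫ ≤ f b := by
  have hline : ConvexOn ℝ univ (fun t : ℝ => f (a + t • (b - a))) := by
    have heq : (fun t : ℝ => f (a + t • (b - a))) = f ∘ AffineMap.lineMap a b := by
      ext t
      simp [AffineMap.lineMap_apply_module', add_comm]
    rw [heq]
    simpa using hc.comp_affineMap (AffineMap.lineMap a b)
  have hder : HasDerivAt (fun t : ℝ => f (a + t • (b - a))) ⟪gradient f a, b - a⟫ 0 :=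
    HasGradientAt.hasDerivAt_comp_line (by simpa using hf.hasGradientAt)
  have hslope := hline.le_slope_of_hasDerivAt (mem_univ 0) (mem_univ 1) one_pos hder
  simp only [slope_def_field, one_smul, zero_smul, add_zero, add_sub_cancel, sub_zero,
    div_one] at hslope
  linarith

theorem ConvexOn.add_inner_gradient_add_sq_norm_le (hc : ConvexOn ℝ univ f)
    (hf : Differentiable ℝ f) {M : ℝ} (hM : 0 < M)
    (hL : ∀ x y, ‖gradient f x - gradient f y‖ ≤ M * ‖x - y‖) (x y : E) :
    f x + ⟪gradient f x, y - x⟫ + 1 / (2 * M) * ‖gradient f y - gradient f x‖ ^ 2 ≤ f y := by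
  set Δ := gradient f y - gradient f x
  set z := y - M⁻¹ • Δ
  have hx := hc.add_inner_gradient_le (hf x) z
  have hy := le_add_inner_gradient_add_sq_norm_of_lipschitz hf hL y z
  have hzx : z - x = (y - x) - M⁻¹ • Δ := by module
  have hzy : z - y = -(M⁻¹ • Δ) := by module
  rw [hzx, inner_sub_right, real_inner_smul_right] at hx
  rw [hzy, inner_neg_right, real_inner_smul_right, norm_neg, norm_smul, Real.norm_eq_abs,
    abs_of_pos (inv_pos.2 hM)] at hy
  have hΔ : M⁻¹ * ⟪gradient f y, Δ⟫ - M⁻¹ * ⟪gradient f x, Δ⟫ = M⁻¹ * ‖Δ‖ ^ 2 := by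
    rw [← mul_sub, ← inner_sub_left, real_inner_self_eq_norm_sq]
  have hstep : M⁻¹ * ‖Δ‖ ^ 2 - M / 2 * (M⁻¹ * ‖Δ‖) ^ 2 = 1 / (2 * M) * ‖Δ‖ ^ 2 := by
    field_simp
    ring
  linarith

theorem ConvexOn.inv_mul_norm_sq_le_inner_gradient_sub (hc : ConvexOn ℝ univ f)
    (hf : Differentiable ℝ f) {M : ℝ} (hM : 0 < M)
    (hL : ∀ x y, ‖gradient f x - gradient f y‖ ≤ M * ‖x - y‖) (x y : E) :
    M⁻¹ * ‖gradient f y - gradient f x‖ ^ 2 ≤ ⟪gradient f y - gradient f x, y - x⟫ := by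
  have hxy := hc.add_inner_gradient_add_sq_norm_le hf hM hL x y
  have hyx := hc.add_inner_gradient_add_sq_norm_le hf hM hL y x
  rw [norm_sub_rev] at hyx
  rw [inner_sub_left, ← neg_sub y x, inner_neg_right] at *
  have hsplit : M⁻¹ = 1 / (2 * M) + 1 / (2 * M) := by
    field_simp
    ring
  rw [hsplit, add_mul]
  linarith

/-- If `h` is `L`-smooth and `σ`-hypoconvex with `-L < σ ≤ 0`, then for all `x, y`:
`h y ≥ h x + ⟪∇h x, y-x⟫ + (σL/(2(L+σ)))‖y-x‖² + (1/(2(L+σ)))‖∇h y - ∇h x‖²`. -/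
theorem lower_bound_smooth_hypoconvex {n : ℕ} (h : EuclideanSpace ℝ (Fin n) → ℝ)
    (L σ : ℝ) (hσ1 : -L < σ) (hσ2 : σ ≤ 0)
    (hC1 : ContDiff ℝ 1 h)
    (hLip : ∀ x y, ‖gradient h x - gradient h y‖ ≤ L * ‖x - y‖)
    (hhyp : ConvexOn ℝ Set.univ (fun x => h x - σ / 2 * ‖x‖ ^ 2)) :
    ∀ x y, h y ≥ h x + (inner ℝ (gradient h x) (y - x) : ℝ)
      + σ * L / (2 * (L + σ)) * ‖y - x‖ ^ 2
      + 1 / (2 * (L + σ)) * ‖gradient h y - gradient h x‖ ^ 2 := by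
  intro x y
  set g := fun z => h z - σ / 2 * ‖z‖ ^ 2
  have hh : Differentiable ℝ h := hC1.differentiable one_ne_zero
  have hg_grad : ∀ z, HasGradientAt g (gradient h z - σ • z) z := fun z =>
    (hh z).hasGradientAt.sub_half_mul_norm_sq σ
  have hg : Differentiable ℝ g := fun z => (hg_grad z).differentiableAt
  have hg_eq : gradient g = fun z => gradient h z - σ • z := gradient_eq hg_grad
  have hg_lip : ∀ a b, ‖gradient g a - gradient g b‖ ≤ (L - σ) * ‖a - b‖ := by
    simpa only [hg_eq] using norm_sub_smul_sub_le_of_lipschitz hσ2 hLip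
  have hM : 0 < L - σ := by linarith
  have hlower := hhyp.add_inner_gradient_add_sq_norm_le hg hM hg_lip x y
  have hquad := quadratic_le_of_cocoercive hσ1 hσ2
    (hhyp.inv_mul_norm_sq_le_inner_gradient_sub hg hM hg_lip x y)
  have hΔ : gradient g y - gradient g x + σ • (y - x) = gradient h y - gradient h x := by
    rw [hg_eq]
    module
  have hbregman : g y - g x - ⟪gradient g x, y - x⟫
      = h y - h x - ⟪gradient h x, y - x⟫ - σ / 2 * ‖y - x‖ ^ 2 := by
    simp only [g, hg_eq, norm_sub_sq_real, inner_sub_left, inner_sub_right, real_inner_smul_left,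
      real_inner_self_eq_norm_sq, real_inner_comm x y]
    ring
  rw [hΔ] at hquad
  linarith
end

section
/- Let h : ℝⁿ → ℝ be L-smooth and σ-hypoconvex with -L < σ ≤ 0. Then for all x, y ∈ ℝⁿ: ⟨∇h(y) - ∇h(x), y - x⟩ ≥ (σL/(L+σ))‖x-y‖² + (1/(L+σ))‖∇h(x) - ∇h(y)‖². -/
/-!
`g = h - (σ/2)‖·‖²` is convex and its gradient `∇h - σ • id` is `(L - σ)`-Lipschitz, as
`|σ| = -σ`. A convex function with `K`-Lipschitz gradient satisfies the Baillon–Haddad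
inequality `‖∇g y - ∇g x‖² ≤ K ⟪∇g y - ∇g x, y - x⟫`: the convex function `g - ⟪∇g x, ·⟫`
is minimised at `x`, while by the descent lemma a gradient step of length `1/K` from `y`
lowers it by at least `‖∇g y - ∇g x‖² / (2K)`; add this bound to its mirror image. Expanding
`∇g = ∇h - σ • id` with `K = L - σ` gives the claim.
-/

open Set InnerProductSpace AffineMap
open scoped RealInnerProductSpace NNReal

variable {F : Type*} [NormedAddCommGroup F] [InnerProductSpace ℝ F] [CompleteSpace F]
  {f k : F → ℝ} {G : F → F} {f' k' x y : F} {K : ℝ≥0}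

lemma HasGradientAt.sub (hf : HasGradientAt f f' x) (hk : HasGradientAt k k' x) :
    HasGradientAt (fun z => f z - k z) (f' - k') x := by
  rw [hasGradientAt_iff_hasFDerivAt, map_sub] at *
  exact hf.sub hk

lemma hasGradientAt_inner_right (a x : F) : HasGradientAt (fun z => ⟪a, z⟫) a x := by
  rw [hasGradientAt_iff_hasFDerivAt]
  exact (toDual ℝ F a).hasFDerivAt

lemma hasGradientAt_half_mul_norm_sq (c : ℝ) (x : F) :
    HasGradientAt (fun z => c / 2 * ‖z‖ ^ 2) (c • x) x := by
  rw [hasGradientAt_iff_hasFDerivAt]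
  refine ((hasStrictFDerivAt_norm_sq x).hasFDerivAt.const_mul (c / 2)).congr_fderiv ?_
  ext v
  simp only [smul_apply, coe_innerSL_apply, nsmul_eq_mul, Nat.cast_ofNat, smul_eq_mul, map_smul,
    toDual_apply_apply]
  ring

lemma HasGradientAt.hasDerivAt_comp_lineMap {t : ℝ} (hf : HasGradientAt f f' (lineMap x y t)) :
    HasDerivAt (fun s => f (lineMap x y s)) ⟪f', y - x⟫ t :=
  hf.hasFDerivAt.comp_hasDerivAt t hasDerivAt_lineMap

lemma ConvexOn.add_inner_le_of_hasGradientAt (hcoconv : ConvexOn ℝ univ f)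
    (hf : HasGradientAt f f' x) (y : F) : f x + ⟪f', y - x⟫ ≤ f y := by
  have hline : ConvexOn ℝ univ (fun t : ℝ => f (lineMap x y t)) :=
    hcoconv.comp_affineMap (lineMap x y)
  have hder := HasGradientAt.hasDerivAt_comp_lineMap (y := y) (t := 0) (by simpa using hf)
  have := hline.le_slope_of_hasDerivAt (mem_univ 0) (mem_univ 1) zero_lt_one hder
  simp only [slope_def_field, lineMap_apply_one, lineMap_apply_zero, sub_zero, div_one] at this
  linarith

lemma le_add_inner_add_of_lipschitzWith (hf : ∀ z, HasGradientAt f (G z) z)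
    (hG : LipschitzWith K G) (x y : F) :
    f y ≤ f x + ⟪G x, y - x⟫ + K / 2 * ‖y - x‖ ^ 2 := by
  set ψ : ℝ → ℝ := fun t =>
    f (lineMap x y t) - t * ⟪G x, y - x⟫ - K / 2 * t ^ 2 * ‖y - x‖ ^ 2
  have hψ (t : ℝ) :
      HasDerivAt ψ (⟪G (lineMap x y t) - G x, y - x⟫ - K * t * ‖y - x‖ ^ 2) t := by
    have := (((hf (lineMap x y t)).hasDerivAt_comp_lineMap).fun_sub
      ((hasDerivAt_id' t).mul_const ⟪G x, y - x⟫)).fun_sub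
      (((hasDerivAt_pow 2 t).const_mul ((K : ℝ) / 2)).mul_const (‖y - x‖ ^ 2))
    refine this.congr_deriv ?_
    rw [inner_sub_left]
    push_cast
    ring
  have hψ' : ∀ t ∈ interior (Ici (0 : ℝ)),
      ⟪G (lineMap x y t) - G x, y - x⟫ - K * t * ‖y - x‖ ^ 2 ≤ 0 := by
    intro t ht
    rw [interior_Ici] at ht
    have hlip : ‖G (lineMap x y t) - G x‖ ≤ K * (t * ‖y - x‖) := by
      have := hG.dist_le_mul (lineMap x y t) x
      rwa [dist_lineMap_left, dist_eq_norm, Real.norm_of_nonneg ht.le, dist_comm, dist_eq_norm]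
        at this
    calc _ ≤ ‖G (lineMap x y t) - G x‖ * ‖y - x‖ - K * t * ‖y - x‖ ^ 2 := by
          gcongr; exact real_inner_le_norm _ _
      _ ≤ K * (t * ‖y - x‖) * ‖y - x‖ - K * t * ‖y - x‖ ^ 2 := by gcongr
      _ = 0 := by ring
  have := antitoneOn_of_hasDerivWithinAt_nonpos (convex_Ici 0)
    (fun t _ => (hψ t).continuousAt.continuousWithinAt) (fun t _ => (hψ t).hasDerivWithinAt) hψ'
    self_mem_Ici (zero_le_one' ℝ) zero_le_one
  simp only [ψ, lineMap_apply_zero, lineMap_apply_one] at this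
  linarith

lemma le_sub_sq_norm_div_of_lipschitzWith (hf : ∀ z, HasGradientAt f (G z) z)
    (hG : LipschitzWith K G) (hK : 0 < K) (x : F) :
    f (x - (K : ℝ)⁻¹ • G x) ≤ f x - ‖G x‖ ^ 2 / (2 * K) := by
  have := le_add_inner_add_of_lipschitzWith hf hG x (x - (K : ℝ)⁻¹ • G x)
  rw [sub_sub_cancel_left, inner_neg_right, norm_neg, real_inner_smul_right, norm_smul,
    real_inner_self_eq_norm_sq, Real.norm_of_nonneg (by positivity)] at this
  have hK' : (K : ℝ) ≠ 0 := by positivity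
  convert this using 1
  field_simp
  ring

lemma ConvexOn.add_inner_add_sq_norm_div_le (hcoconv : ConvexOn ℝ univ f)
    (hf : ∀ z, HasGradientAt f (G z) z) (hG : LipschitzWith K G) (hK : 0 < K) (x y : F) :
    f x + ⟪G x, y - x⟫ + ‖G y - G x‖ ^ 2 / (2 * K) ≤ f y := by
  set φ : F → ℝ := fun z => f z - ⟪G x, z⟫
  have hφ : ∀ z, HasGradientAt φ (G z - G x) z :=
    fun z => (hf z).sub (hasGradientAt_inner_right (G x) z)
  have hφconv : ConvexOn ℝ univ φ := hcoconv.sub ((innerₛₗ ℝ (G x)).concaveOn convex_univ)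
  have hGφ : LipschitzWith K (fun z => G z - G x) := by
    simpa using hG.sub (LipschitzWith.const (G x))
  have hmin := hφconv.add_inner_le_of_hasGradientAt (hφ x) (y - (K : ℝ)⁻¹ • (G y - G x))
  have hstep := le_sub_sq_norm_div_of_lipschitzWith hφ hGφ hK y
  simp only [φ, sub_self, inner_zero_left, add_zero, inner_sub_right] at hmin hstep ⊢
  linarith

theorem ConvexOn.sq_norm_sub_le_mul_inner (hcoconv : ConvexOn ℝ univ f)
    (hf : ∀ z, HasGradientAt f (G z) z) (hG : LipschitzWith K G) (hK : 0 < K) (x y : F) :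
    ‖G y - G x‖ ^ 2 ≤ K * ⟪G y - G x, y - x⟫ := by
  have hxy := hcoconv.add_inner_add_sq_norm_div_le hf hG hK x y
  have hyx := hcoconv.add_inner_add_sq_norm_div_le hf hG hK y x
  rw [norm_sub_rev, ← neg_sub y x, inner_neg_right] at hyx
  have hK' : (K : ℝ) ≠ 0 := by positivity
  calc ‖G y - G x‖ ^ 2 = K * (2 * (‖G y - G x‖ ^ 2 / (2 * K))) := by field_simp
    _ ≤ K * ⟪G y - G x, y - x⟫ := by
      rw [inner_sub_left]
      gcongr
      linarith

/-- If `h` is `L`-smooth and `σ`-hypoconvex with `-L < σ ≤ 0`, then for all `x, y`: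
`⟪∇h y - ∇h x, y - x⟫ ≥ (σL/(L+σ))‖x-y‖² + (1/(L+σ))‖∇h x - ∇h y‖²`. -/
theorem gradient_cocoercivity_hypoconvex {n : ℕ} (h : EuclideanSpace ℝ (Fin n) → ℝ)
    (L σ : ℝ) (hσ1 : -L < σ) (hσ2 : σ ≤ 0)
    (hC1 : ContDiff ℝ 1 h)
    (hLip : ∀ x y, ‖gradient h x - gradient h y‖ ≤ L * ‖x - y‖)
    (hhyp : ConvexOn ℝ Set.univ (fun x => h x - σ / 2 * ‖x‖ ^ 2)) :
    ∀ x y, (inner ℝ (gradient h y - gradient h x) (y - x) : ℝ) ≥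
      σ * L / (L + σ) * ‖x - y‖ ^ 2 + 1 / (L + σ) * ‖gradient h x - gradient h y‖ ^ 2 := by
  intro x y
  have hL : 0 < L := by linarith
  have hgrad (z) : HasGradientAt (fun w => h w - σ / 2 * ‖w‖ ^ 2) (gradient h z - σ • z) z :=
    ((hC1.differentiable one_ne_zero z).hasGradientAt).sub (hasGradientAt_half_mul_norm_sq σ z)
  have hG : LipschitzWith L.toNNReal (gradient h) :=
    .of_dist_le' fun a b => by simpa only [dist_eq_norm] using hLip a b
  have hcoco := hhyp.sq_norm_sub_le_mul_inner hgrad (hG.sub (lipschitzWith_smul σ))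
    (by positivity) x y
  rw [NNReal.coe_add, Real.coe_toNNReal _ hL.le, coe_nnnorm, Real.norm_of_nonpos hσ2,
    show gradient h y - σ • y - (gradient h x - σ • x)
      = gradient h y - gradient h x - σ • (y - x) by rw [smul_sub]; abel] at hcoco
  rw [ge_iff_le, norm_sub_rev x, norm_sub_rev (gradient h x), div_mul_eq_mul_div,
    one_div_mul_eq_div, ← add_div, div_le_iff₀ (by linarith)]
  set u := gradient h y - gradient h x
  set d := y - x
  rw [norm_sub_sq_real, real_inner_smul_right, inner_sub_left u, real_inner_smul_left,
    real_inner_self_eq_norm_sq, norm_smul, Real.norm_eq_abs, mul_pow, sq_abs] at hcoco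
  linear_combination hcoco
end

section
/- Let h : ℝⁿ → ℝ be L-smooth and σ-hypoconvex, and 0 < γ < 1/[σ]₋. Then prox_{γh} is (1/(1+γL))-strongly monotone and (1+γσ)-cocoercive: for all s, s' with u = prox_{γh}(s), u' = prox_{γh}(s'), one has ⟨u - u', s - s'⟩ ≥ (1/(1+γL))‖s - s'‖² and ⟨u - u', s - s'⟩ ≥ (1+γσ)‖u - u'‖². In particular (1/(1+γL))‖s-s'‖ ≤ ‖u-u'‖ ≤ (1/(1+γσ))‖s-s'‖. -/
/-!
Put `Δ = u - u'` and `g = ∇h u - ∇h u'`. The optimality condition of the prox reads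
`s - u = γ ∇h u`, so `s - s' = Δ + γ g`. Hypoconvexity and `L`-smoothness make
`φ = h - σ/2 ‖·‖²` convex with an `(L - σ)`-quadratic upper bound, hence `∇φ = ∇h - σ id` is
cocoercive (Baillon–Haddad): `‖g - σΔ‖² ≤ (L - σ) ⟪g - σΔ, Δ⟫`. With `⟪g, Δ⟫ ≤ L ‖Δ‖²` this gives
`(1 + γL) ⟪Δ, s - s'⟫ - ‖s - s'‖² ≥ γ (1 + γσ) (L ‖Δ‖² - ⟪g, Δ⟫) ≥ 0`.
Cocoercivity of the prox reduces to `⟪g, Δ⟫ ≥ σ ‖Δ‖²`, and both norm bounds follow from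
Cauchy–Schwarz.
-/

open Set InnerProductSpace
open scoped Gradient RealInnerProductSpace

theorem ConvexOn.add_le_of_hasFDerivAt {F : Type*} [NormedAddCommGroup F] [NormedSpace ℝ F]
    {s : Set F} {f : F → ℝ} {f' : F →L[ℝ] ℝ} {x y : F} (hf : ConvexOn ℝ s f) (hx : x ∈ s)
    (hy : y ∈ s) (hf' : HasFDerivAt f f' x) : f x + f' (y - x) ≤ f y := by
  let ℓ : ℝ →ᵃ[ℝ] F := AffineMap.lineMap x y
  have hℓ0 : ℓ 0 = x := AffineMap.lineMap_apply_zero x y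
  have hℓ1 : ℓ 1 = y := AffineMap.lineMap_apply_one x y
  have hderiv : HasDerivAt (f ∘ ℓ) (f' (y - x)) 0 :=
    (hℓ0 ▸ hf').comp_hasDerivAt (0 : ℝ) AffineMap.hasDerivAt_lineMap
  have := (hf.comp_affineMap ℓ).le_slope_of_hasDerivAt (x := 0) (y := 1)
    (by simpa [hℓ0]) (by simpa [hℓ1]) one_pos hderiv
  rw [slope_def_field, Function.comp_apply, Function.comp_apply, hℓ0, hℓ1] at this
  linarith

variable {E : Type*} [NormedAddCommGroup E] [InnerProductSpace ℝ E]

theorem mul_norm_le_norm_of_mul_sq_le_inner {μ : ℝ} {x y : E} (h : μ * ‖x‖ ^ 2 ≤ ⟪x, y⟫) :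
    μ * ‖x‖ ≤ ‖y‖ := by
  rcases (norm_nonneg x).eq_or_lt with hx | hx
  · simp [← hx]
  · refine le_of_mul_le_mul_right ?_ hx
    linarith [real_inner_le_norm x y]

theorem inner_sub_nonneg_of_forall_add_inner_le {f : E → ℝ} {G : E → E}
    (hlow : ∀ x y, f x + ⟪G x, y - x⟫ ≤ f y) (x y : E) : 0 ≤ ⟪G x - G y, x - y⟫ := by
  have hxy := hlow x y
  have hyx := hlow y x
  rw [← neg_sub x y, inner_neg_right] at hxy
  rw [inner_sub_left]
  linarith

theorem norm_sub_sq_le_two_mul_bregman {f : E → ℝ} {G : E → E} {M : ℝ} (hM : 0 < M)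
    (hlow : ∀ x y, f x + ⟪G x, y - x⟫ ≤ f y)
    (hup : ∀ x y, f y ≤ f x + ⟪G x, y - x⟫ + M / 2 * ‖y - x‖ ^ 2) (x y : E) :
    ‖G y - G x‖ ^ 2 ≤ 2 * M * (f y - f x - ⟪G x, y - x⟫) := by
  set d := G y - G x
  have hlow' := hlow x (y - M⁻¹ • d)
  have hup' := hup y (y - M⁻¹ • d)
  rw [sub_sub_cancel_left, inner_neg_right, real_inner_smul_right, norm_neg, norm_smul,
    Real.norm_eq_abs, mul_pow, sq_abs] at hup'
  rw [sub_right_comm, inner_sub_right, real_inner_smul_right] at hlow'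
  have hd : M⁻¹ * ⟪G y, d⟫ - M⁻¹ * ⟪G x, d⟫ = M⁻¹ * ‖d‖ ^ 2 := by
    rw [← mul_sub, ← inner_sub_left, real_inner_self_eq_norm_sq]
  have hM' : M / 2 * (M⁻¹ ^ 2 * ‖d‖ ^ 2) = M⁻¹ / 2 * ‖d‖ ^ 2 := by field_simp
  have key : M⁻¹ / 2 * ‖d‖ ^ 2 ≤ f y - f x - ⟪G x, y - x⟫ := by linarith
  calc ‖d‖ ^ 2 = 2 * M * (M⁻¹ / 2 * ‖d‖ ^ 2) := by field_simp
    _ ≤ 2 * M * (f y - f x - ⟪G x, y - x⟫) := by gcongr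

theorem norm_sub_sq_le_mul_inner_of_forall_le {f : E → ℝ} {G : E → E} {M : ℝ} (hM : 0 < M)
    (hlow : ∀ x y, f x + ⟪G x, y - x⟫ ≤ f y)
    (hup : ∀ x y, f y ≤ f x + ⟪G x, y - x⟫ + M / 2 * ‖y - x‖ ^ 2) (x y : E) :
    ‖G x - G y‖ ^ 2 ≤ M * ⟪G x - G y, x - y⟫ := by
  have hxy := norm_sub_sq_le_two_mul_bregman hM hlow hup x y
  have hyx := norm_sub_sq_le_two_mul_bregman hM hlow hup y x
  rw [norm_sub_rev] at hxy
  have : ⟪G x - G y, x - y⟫ = (f x - f y - ⟪G y, x - y⟫) + (f y - f x - ⟪G x, y - x⟫) := by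
    rw [← neg_sub x y, inner_neg_right, inner_sub_left]; ring
  rw [this]
  linarith

variable [CompleteSpace E]

theorem sub_eq_smul_gradient_of_isMinOn_prox {h : E → ℝ} {γ : ℝ} {s u : E} (hγ : γ ≠ 0)
    (hd : DifferentiableAt ℝ h u)
    (hu : IsMinOn (fun w => h w + 1 / (2 * γ) * ‖w - s‖ ^ 2) univ u) :
    s - u = γ • ∇ h u := by
  have hF := hd.hasFDerivAt.add (((hasFDerivAt_id u).sub_const s).norm_sq.const_mul (1 / (2 * γ)))
  have hzero := (hu.isLocalMin Filter.univ_mem).hasFDerivAt_eq_zero hF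
  have hinner : ∀ v, ⟪γ • ∇ h u - (s - u), v⟫ = 0 := fun v => by
    have := congrArg (· v) hzero
    simp only [add_apply, smul_apply, ContinuousLinearMap.comp_apply, innerSL_apply_apply, id,
      zero_apply, ContinuousLinearMap.id_apply, smul_eq_mul, nsmul_eq_mul] at this
    rw [inner_sub_left, real_inner_smul_left, inner_gradient_left, ← neg_sub u s, inner_neg_left]
    field_simp at this
    push_cast at this
    linear_combination (1 / 2 : ℝ) * this
  exact (sub_eq_zero.mp (inner_self_eq_zero.mp (hinner _))).symm

theorem hasGradientAt_sub_half_mul_norm_sq {h : E → ℝ} {x : E} (hd : DifferentiableAt ℝ h x)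
    (c : ℝ) :
    HasGradientAt (fun x => h x - c / 2 * ‖x‖ ^ 2) (∇ h x - c • x) x := by
  rw [hasGradientAt_iff_hasFDerivAt]
  refine (hd.hasFDerivAt.sub
    ((hasStrictFDerivAt_norm_sq x).hasFDerivAt.const_mul (c / 2))).congr_fderiv ?_
  ext v
  simp only [sub_apply, smul_apply, coe_innerSL_apply, nsmul_eq_mul, Nat.cast_ofNat, smul_eq_mul,
    map_sub, toDual_gradient, map_smul, toDual_apply_apply, sub_right_inj]
  ring

theorem le_add_inner_gradient_add_of_lipschitz {h : E → ℝ} {L : ℝ} (hd : Differentiable ℝ h)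
    (hLip : ∀ x y, ‖∇ h x - ∇ h y‖ ≤ L * ‖x - y‖) (x y : E) :
    h y ≤ h x + ⟪∇ h x, y - x⟫ + L / 2 * ‖y - x‖ ^ 2 := by
  set v := y - x
  let χ : ℝ → ℝ := fun t => h (x + t • v) - t * ⟪∇ h x, v⟫ - L / 2 * ‖v‖ ^ 2 * t ^ 2
  let χ' : ℝ → ℝ := fun t => ⟪∇ h (x + t • v) - ∇ h x, v⟫ - L * ‖v‖ ^ 2 * t
  have hχ : ∀ t, HasDerivAt χ (χ' t) t := fun t => by
    have hline : HasDerivAt (fun t : ℝ => x + t • v) v t := by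
      simpa using ((hasDerivAt_id t).smul_const v).const_add x
    refine ((((hd _).hasFDerivAt.comp_hasDerivAt t hline).sub
      ((hasDerivAt_id t).mul_const ⟪∇ h x, v⟫)).sub
        ((hasDerivAt_pow 2 t).const_mul (L / 2 * ‖v‖ ^ 2))).congr_deriv ?_
    simp only [χ', inner_sub_left, inner_gradient_left]
    push_cast
    ring
  obtain ⟨c, hc, hslope⟩ := exists_hasDerivAt_eq_slope χ χ' zero_lt_one
    (HasDerivAt.continuousOn fun t _ => hχ t) fun t _ => hχ t
  have hχ'c : χ' c ≤ 0 := by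
    have hgrad := hLip (x + c • v) x
    rw [add_sub_cancel_left, norm_smul, Real.norm_of_nonneg hc.1.le] at hgrad
    have hcs := real_inner_le_norm (∇ h (x + c • v) - ∇ h x) v
    simp only [χ']
    nlinarith [mul_le_mul_of_nonneg_right hgrad (norm_nonneg v)]
  simp only [χ, v, one_smul, zero_smul, add_zero, add_sub_cancel, one_mul, zero_mul, one_pow,
    sub_zero, div_one] at hslope
  linarith

section Hypoconvex

variable {h : E → ℝ} {σ L : ℝ}

theorem add_inner_gradient_sub_smul_le_of_convexOn_sub (hd : Differentiable ℝ h)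
    (hhyp : ConvexOn ℝ univ fun x => h x - σ / 2 * ‖x‖ ^ 2) (x y : E) :
    h x - σ / 2 * ‖x‖ ^ 2 + ⟪∇ h x - σ • x, y - x⟫ ≤ h y - σ / 2 * ‖y‖ ^ 2 :=
  hhyp.add_le_of_hasFDerivAt (mem_univ x) (mem_univ y)
    (hasGradientAt_iff_hasFDerivAt.mp (hasGradientAt_sub_half_mul_norm_sq (hd x) σ))

theorem mul_norm_sub_sq_le_inner_gradient_sub (hd : Differentiable ℝ h)
    (hhyp : ConvexOn ℝ univ fun x => h x - σ / 2 * ‖x‖ ^ 2) (x y : E) :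
    σ * ‖x - y‖ ^ 2 ≤ ⟪∇ h x - ∇ h y, x - y⟫ := by
  have := inner_sub_nonneg_of_forall_add_inner_le
    (add_inner_gradient_sub_smul_le_of_convexOn_sub hd hhyp) x y
  rw [sub_sub_sub_comm, ← smul_sub, inner_sub_left, real_inner_smul_left,
    real_inner_self_eq_norm_sq] at this
  linarith

theorem le_add_inner_gradient_sub_smul_add_of_lipschitz (hd : Differentiable ℝ h)
    (hLip : ∀ x y, ‖∇ h x - ∇ h y‖ ≤ L * ‖x - y‖) (x y : E) :
    h y - σ / 2 * ‖y‖ ^ 2 ≤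
      h x - σ / 2 * ‖x‖ ^ 2 + ⟪∇ h x - σ • x, y - x⟫ + (L - σ) / 2 * ‖y - x‖ ^ 2 := by
  have hdesc := le_add_inner_gradient_add_of_lipschitz hd hLip x y
  have hy : ‖y‖ ^ 2 = ‖x‖ ^ 2 + 2 * ⟪x, y - x⟫ + ‖y - x‖ ^ 2 := by
    simpa using norm_add_sq_real x (y - x)
  rw [inner_sub_left, real_inner_smul_left]
  linear_combination hdesc - σ / 2 * hy

theorem norm_gradient_sub_sub_smul_sq_le (hσL : σ ≤ L) (hL : 0 ≤ L) (hd : Differentiable ℝ h)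
    (hLip : ∀ x y, ‖∇ h x - ∇ h y‖ ≤ L * ‖x - y‖)
    (hhyp : ConvexOn ℝ univ fun x => h x - σ / 2 * ‖x‖ ^ 2) (x y : E) :
    ‖∇ h x - ∇ h y - σ • (x - y)‖ ^ 2 ≤ (L - σ) * ⟪∇ h x - ∇ h y - σ • (x - y), x - y⟫ := by
  rcases hσL.lt_or_eq with hlt | rfl
  · have := norm_sub_sq_le_mul_inner_of_forall_le (sub_pos.mpr hlt)
      (add_inner_gradient_sub_smul_le_of_convexOn_sub hd hhyp)
      (le_add_inner_gradient_sub_smul_add_of_lipschitz hd hLip) x y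
    rwa [sub_sub_sub_comm, ← smul_sub] at this
  · -- `∇h - L • id` is monotone and `∇h` is `L`-Lipschitz, which forces `∇h x - ∇h y = L • (x - y)`
    have hmono := mul_norm_sub_sq_le_inner_gradient_sub hd hhyp x y
    have hlip := hLip x y
    rw [sub_self, zero_mul, norm_sub_sq_real, real_inner_smul_right, norm_smul,
      Real.norm_of_nonneg hL]
    nlinarith [norm_nonneg (∇ h x - ∇ h y), norm_nonneg (x - y)]

end Hypoconvex

/-- For `h` `L`-smooth and `σ`-hypoconvex and `0 < γ < 1/[σ]₋`, the proximal
mapping is `(1/(1+γL))`-strongly monotone and `(1+γσ)`-cocoercive, and in particular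
`(1/(1+γL))‖s-s'‖ ≤ ‖u-u'‖ ≤ (1/(1+γσ))‖s-s'‖` for `u = prox_{γh}(s)`, `u' = prox_{γh}(s')`. -/
theorem prox_strongly_monotone_cocoercive {n : ℕ}
    (h : EuclideanSpace ℝ (Fin n) → ℝ) (L σ γ : ℝ) (hσ : σ ∈ Set.Icc (-L) L)
    (hC1 : ContDiff ℝ 1 h)
    (hLip : ∀ x y, ‖gradient h x - gradient h y‖ ≤ L * ‖x - y‖)
    (hhyp : ConvexOn ℝ Set.univ (fun x => h x - σ / 2 * ‖x‖ ^ 2))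
    (hγ0 : 0 < γ) (hγ : γ * max 0 (-σ) < 1)
    (s s' u u' : EuclideanSpace ℝ (Fin n))
    (hu : IsMinOn (fun w => h w + 1 / (2 * γ) * ‖w - s‖ ^ 2) Set.univ u)
    (hu' : IsMinOn (fun w => h w + 1 / (2 * γ) * ‖w - s'‖ ^ 2) Set.univ u') :
    (inner ℝ (u - u') (s - s') : ℝ) ≥ 1 / (1 + γ * L) * ‖s - s'‖ ^ 2 ∧
    (inner ℝ (u - u') (s - s') : ℝ) ≥ (1 + γ * σ) * ‖u - u'‖ ^ 2 ∧
    1 / (1 + γ * L) * ‖s - s'‖ ≤ ‖u - u'‖ ∧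
    ‖u - u'‖ ≤ 1 / (1 + γ * σ) * ‖s - s'‖ := by
  obtain ⟨hLσ, hσL⟩ := hσ
  have hd : Differentiable ℝ h := hC1.differentiable one_ne_zero
  have hγσ : 0 < 1 + γ * σ := by
    nlinarith [mul_le_mul_of_nonneg_left (le_max_right 0 (-σ)) hγ0.le]
  have hγL : 0 < 1 + γ * L := by nlinarith
  have hS : s - s' = (u - u') + γ • (∇ h u - ∇ h u') := by
    rw [smul_sub, ← sub_eq_smul_gradient_of_isMinOn_prox hγ0.ne' (hd u) hu,
      ← sub_eq_smul_gradient_of_isMinOn_prox hγ0.ne' (hd u') hu']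
    abel
  have hgradMono := mul_norm_sub_sq_le_inner_gradient_sub hd hhyp u u'
  have hgradCoco := norm_gradient_sub_sub_smul_sq_le hσL (by linarith) hd hLip hhyp u u'
  have hgradLip := hLip u u'
  set Δ := u - u'
  set g := ∇ h u - ∇ h u'
  clear_value Δ g
  rw [norm_sub_sq_real, real_inner_smul_right, norm_smul, Real.norm_eq_abs, mul_pow, sq_abs,
    inner_sub_left, real_inner_smul_left, real_inner_self_eq_norm_sq] at hgradCoco
  have hgΔ : ⟪g, Δ⟫ ≤ L * ‖Δ‖ ^ 2 :=
    (real_inner_le_norm g Δ).trans (by nlinarith [norm_nonneg Δ])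
  have hinner : ⟪Δ, s - s'⟫ = ‖Δ‖ ^ 2 + γ * ⟪g, Δ⟫ := by
    rw [hS, inner_add_right, real_inner_smul_right, real_inner_self_eq_norm_sq, real_inner_comm]
  have hnorm : ‖s - s'‖ ^ 2 = ‖Δ‖ ^ 2 + 2 * γ * ⟪g, Δ⟫ + γ ^ 2 * ‖g‖ ^ 2 := by
    rw [hS, norm_add_sq_real, real_inner_smul_right, norm_smul, Real.norm_of_nonneg hγ0.le,
      mul_pow, real_inner_comm]
    ring
  have hstrong : ⟪Δ, s - s'⟫ ≥ 1 / (1 + γ * L) * ‖s - s'‖ ^ 2 := by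
    rw [ge_iff_le, one_div_mul_eq_div, div_le_iff₀ hγL, hinner, hnorm]
    linear_combination (γ * (1 + γ * σ)) * hgΔ + γ ^ 2 * hgradCoco
  have hcoco : ⟪Δ, s - s'⟫ ≥ (1 + γ * σ) * ‖Δ‖ ^ 2 := by
    rw [hinner]
    linear_combination γ * hgradMono
  refine ⟨hstrong, hcoco, mul_norm_le_norm_of_mul_sq_le_inner ?_, ?_⟩
  · rwa [real_inner_comm]
  · rw [one_div_mul_eq_div, le_div_iff₀ hγσ, mul_comm]
    exact mul_norm_le_norm_of_mul_sq_le_inner hcoco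
end

section
/- Let f be L-smooth and g proper lsc with argmin(f+g) ≠ ∅, and γ < 1/L. Then inf (f+g) = inf φ_γ^{DR} and argmin(f+g) = prox_{γf}(argmin φ_γ^{DR}), where φ_γ^{DR} is the Douglas–Rachford envelope. -/
/-!
Everything rests on the descent lemma `|f y - f x - ⟪∇f x, y - x⟫| ≤ L/2 ‖y - x‖²`.
Its upper half makes the quadratic model at `u` dominate `f + μ‖· - u‖²`, where
`μ = 1/(2γ) - L/2 > 0`, so `φ ≥ inf (f + g)`. Its lower half makes `x` the unique minimiser of the
prox problem at `x + γ∇f x`, so `x ↦ x + γ∇f x` is a right inverse of `prox_{γf}` and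
`φ (x + γ∇f x) ≤ f x + g x`. This gives the equality of the infima and one inclusion of argmins.
For the other, let `s` minimise `φ` and `u = prox_{γf} s`: near-minimisers `w` of the model
satisfy `(f + g) w + μ‖w - u‖² ≈ inf (f + g)`, so they approach `u`, and lower semicontinuity
of `f + g` gives `(f + g) u ≤ inf (f + g)`.
-/

open Set

theorem iInf_eq_iInf_and_setOf_isMinOn_eq_image {α S β : Type*} [CompleteLattice β]
    {h : α → β} {φ : S → β} {p : S → α} {sec : α → S} (hp : ∀ x, p (sec x) = x)
    (hle : ∀ s, ⨅ x, h x ≤ φ s) (hsec : ∀ x, φ (sec x) ≤ h x)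
    (hmin : ∀ s, IsMinOn φ univ s → h (p s) ≤ φ s) :
    ⨅ x, h x = ⨅ s, φ s ∧ {x | IsMinOn h univ x} = p '' {s | IsMinOn φ univ s} := by
  refine ⟨le_antisymm (le_iInf hle) (le_iInf fun x => iInf_le_of_le (sec x) (hsec x)), ?_⟩
  ext x
  constructor
  · intro hx
    exact ⟨sec x, fun s _ => (hsec x).trans ((le_iInf fun y => hx (mem_univ y)).trans (hle s)),
      hp x⟩
  · rintro ⟨s, hs, rfl⟩ y -
    exact (hmin s hs).trans ((hs (mem_univ (sec y))).trans (hsec y))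

theorem LowerSemicontinuousAt.le_of_iInf_add_sq_norm_le {E : Type*} [SeminormedAddCommGroup E]
    {h : E → EReal} {u : E} (hh : LowerSemicontinuousAt h u) {μ : ℝ} (hμ : 0 < μ) {m : EReal}
    (hm : m ≠ ⊥) (hle : ∀ w, m ≤ h w) (H : ⨅ w, h w + ((μ * ‖w - u‖ ^ 2 : ℝ) : EReal) ≤ m) :
    h u ≤ m := by
  induction m using EReal.rec with
  | bot => exact absurd rfl hm
  | top => exact le_top
  | coe m =>
    by_contra! hlt
    obtain ⟨r, hmr, hru⟩ := EReal.lt_iff_exists_real_btwn.1 hlt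
    obtain ⟨δ, hδ, hball⟩ := Metric.eventually_nhds_iff_ball.1 (hh r hru)
    set ε := min (r - m) (μ * δ ^ 2)
    have hε : 0 < ε := lt_min (sub_pos.2 (EReal.coe_lt_coe_iff.1 hmr)) (by positivity)
    obtain ⟨w, hw⟩ :=
      iInf_lt_iff.1 (H.trans_lt (EReal.coe_lt_coe_iff.2 (lt_add_of_pos_right m hε)))
    have hmw := hle w
    have hrw := hball w
    cases hz : h w using EReal.rec with
    | bot => exact hm (le_bot_iff.1 (hz ▸ hmw))
    | top => rw [hz, EReal.top_add_coe] at hw; exact not_top_lt hw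
    | coe a =>
      rw [hz, ← EReal.coe_add, EReal.coe_lt_coe_iff] at hw
      rw [hz, EReal.coe_le_coe_iff] at hmw
      have hwu : ‖w - u‖ < δ := by
        have : μ * ‖w - u‖ ^ 2 < μ * δ ^ 2 := by linarith [min_le_right (r - m) (μ * δ ^ 2)]
        exact lt_of_pow_lt_pow_left₀ 2 hδ.le (lt_of_mul_lt_mul_left this hμ.le)
      have hra : r < a := by simpa [hz] using hrw (mem_ball_iff_norm.2 hwu)
      linarith [min_le_left (r - m) (μ * δ ^ 2), mul_nonneg hμ.le (sq_nonneg ‖w - u‖)]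

section SmoothGradient

variable {E : Type*} [NormedAddCommGroup E] [InnerProductSpace ℝ E] [CompleteSpace E]
  {f : E → ℝ} {L : ℝ}

noncomputable def quadModel (f : E → ℝ) (γ : ℝ) (u w : E) : ℝ :=
  f u + inner ℝ (gradient f u) (w - u) + 1 / (2 * γ) * ‖w - u‖ ^ 2

/-- The Douglas–Rachford envelope `φ_γ^{DR}`, with `pf` in the role of `prox_{γf}`. -/
noncomputable def drEnvelope (f : E → ℝ) (g : E → EReal) (γ : ℝ) (pf : E → E) (s : E) : EReal :=
  ⨅ w, g w + (quadModel f γ (pf s) w : EReal)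

theorem quadModel_self (f : E → ℝ) (γ : ℝ) (u : E) : quadModel f γ u u = f u := by
  simp [quadModel]

theorem abs_sub_sub_inner_gradient_le (hf : Differentiable ℝ f)
    (hLip : ∀ x y, ‖gradient f x - gradient f y‖ ≤ L * ‖x - y‖) (x y : E) :
    |f y - f x - inner ℝ (gradient f x) (y - x)| ≤ L / 2 * ‖y - x‖ ^ 2 := by
  set v := y - x
  have hderiv (t : ℝ) :
      HasDerivAt (fun t : ℝ => f (x + t • v) - f x - t * inner ℝ (gradient f x) v)
        (inner ℝ (gradient f (x + t • v) - gradient f x) v) t := by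
    have hline : HasDerivAt (fun t : ℝ => x + t • v) v t := by
      simpa using ((hasDerivAt_id t).smul_const v).const_add x
    have hcomp := (hf (x + t • v)).hasGradientAt.hasFDerivAt.comp_hasDerivAt t hline
    refine ((hcomp.sub_const (f x)).sub ((hasDerivAt_id t).mul_const _)).congr_deriv ?_
    simp [inner_sub_left]
  have hbound : ∀ t ∈ Ico (0 : ℝ) 1,
      ‖inner ℝ (gradient f (x + t • v) - gradient f x) v‖ ≤ L * ‖v‖ ^ 2 * t := by
    intro t ht
    calc ‖inner ℝ (gradient f (x + t • v) - gradient f x) v‖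
        ≤ ‖gradient f (x + t • v) - gradient f x‖ * ‖v‖ := norm_inner_le_norm _ _
      _ ≤ L * ‖(x + t • v) - x‖ * ‖v‖ := by gcongr; exact hLip _ _
      _ = L * ‖v‖ ^ 2 * t := by
        rw [add_sub_cancel_left, norm_smul, Real.norm_of_nonneg ht.1]; ring
  have hquad (t : ℝ) :
      HasDerivAt (fun t : ℝ => L / 2 * ‖v‖ ^ 2 * t ^ 2) (L * ‖v‖ ^ 2 * t) t := by
    refine ((hasDerivAt_pow 2 t).const_mul (L / 2 * ‖v‖ ^ 2)).congr_deriv ?_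
    push_cast; ring
  have := image_norm_le_of_norm_deriv_right_le_deriv_boundary
    (fun t _ => (hderiv t).continuousAt.continuousWithinAt)
    (fun t _ => (hderiv t).hasDerivWithinAt) (by simp) hquad hbound (right_mem_Icc.2 zero_le_one)
  simpa [v] using this

theorem add_sq_norm_le_quadModel (hf : Differentiable ℝ f)
    (hLip : ∀ x y, ‖gradient f x - gradient f y‖ ≤ L * ‖x - y‖) (γ : ℝ) (u w : E) :
    f w + (1 / (2 * γ) - L / 2) * ‖w - u‖ ^ 2 ≤ quadModel f γ u w := by
  have := (abs_le.1 (abs_sub_sub_inner_gradient_le hf hLip u w)).2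
  unfold quadModel
  linarith

theorem prox_objective_add_sq_norm_le (hf : Differentiable ℝ f)
    (hLip : ∀ x y, ‖gradient f x - gradient f y‖ ≤ L * ‖x - y‖) {γ : ℝ} (hγ : 0 < γ) (x y : E) :
    f x + 1 / (2 * γ) * ‖x - (x + γ • gradient f x)‖ ^ 2 + (1 / (2 * γ) - L / 2) * ‖y - x‖ ^ 2 ≤
      f y + 1 / (2 * γ) * ‖y - (x + γ • gradient f x)‖ ^ 2 := by
  have hdescent := (abs_le.1 (abs_sub_sub_inner_gradient_le hf hLip x y)).1
  rw [sub_add_cancel_left, norm_neg, sub_add_eq_sub_sub, norm_sub_sq_real (y - x),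
    real_inner_smul_right, real_inner_comm]
  have hγ' : 1 / (2 * γ) * (2 * γ) = 1 := by field_simp
  linear_combination hdescent + inner ℝ (gradient f x) (y - x) * hγ'

theorem eq_of_isMinOn_prox_add_smul_gradient (hf : Differentiable ℝ f)
    (hLip : ∀ x y, ‖gradient f x - gradient f y‖ ≤ L * ‖x - y‖) {γ : ℝ} (hγ : 0 < γ)
    (hμ : 0 < 1 / (2 * γ) - L / 2) {x y : E}
    (hy : IsMinOn (fun w => f w + 1 / (2 * γ) * ‖w - (x + γ • gradient f x)‖ ^ 2) univ y) :
    y = x := by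
  have hyx : (1 / (2 * γ) - L / 2) * ‖y - x‖ ^ 2 ≤ 0 := by
    have hmin : f y + 1 / (2 * γ) * ‖y - (x + γ • gradient f x)‖ ^ 2 ≤
        f x + 1 / (2 * γ) * ‖x - (x + γ • gradient f x)‖ ^ 2 := hy (mem_univ x)
    linarith [prox_objective_add_sq_norm_le hf hLip hγ x y]
  rw [← sub_eq_zero, ← norm_eq_zero]
  exact (sq_nonpos_iff _).1 (nonpos_of_mul_nonpos_right hyx hμ)

end SmoothGradient

theorem DRE_inf_and_argmin_equiv_general {n : ℕ} (f : EuclideanSpace ℝ (Fin n) → ℝ)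
    (g : EuclideanSpace ℝ (Fin n) → EReal) (L γ : ℝ) (hL : 0 < L)
    (hC1 : ContDiff ℝ 1 f)
    (hLip : ∀ x y, ‖gradient f x - gradient f y‖ ≤ L * ‖x - y‖)
    (hgbot : ∀ x, g x ≠ ⊥) (hglsc : LowerSemicontinuous g)
    (hγ0 : 0 < γ) (hγ : γ < 1 / L)
    (hargmin : {x | IsMinOn (fun x => ((f x : ℝ) : EReal) + g x) Set.univ x}.Nonempty)
    (pf : EuclideanSpace ℝ (Fin n) → EuclideanSpace ℝ (Fin n))
    (hpf : ∀ s, IsMinOn (fun w => f w + 1 / (2 * γ) * ‖w - s‖ ^ 2) Set.univ (pf s)) :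
    (⨅ x, (((f x : ℝ) : EReal) + g x)) =
      (⨅ s, ⨅ w, (g w + ((f (pf s) + (inner ℝ (gradient f (pf s)) (w - pf s) : ℝ)
        + 1 / (2 * γ) * ‖w - pf s‖ ^ 2 : ℝ) : EReal))) ∧
    {x | IsMinOn (fun x => ((f x : ℝ) : EReal) + g x) Set.univ x} =
      pf '' {s | IsMinOn (fun s => ⨅ w, (g w + ((f (pf s)
        + (inner ℝ (gradient f (pf s)) (w - pf s) : ℝ)
        + 1 / (2 * γ) * ‖w - pf s‖ ^ 2 : ℝ) : EReal))) Set.univ s} := by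
  have hf : Differentiable ℝ f := hC1.differentiable one_ne_zero
  have hμ : 0 < 1 / (2 * γ) - L / 2 := by
    have hγL : γ * L < 1 := (lt_div_iff₀ hL).1 hγ
    rw [div_sub_div _ _ (by positivity) two_ne_zero]
    exact div_pos (by nlinarith) (by positivity)
  have hpf_inv (x) : pf (x + γ • gradient f x) = x :=
    eq_of_isMinOn_prox_add_smul_gradient hf hLip hγ0 hμ (hpf _)
  have hmodel (s w) :
      (f w : EReal) + g w + (((1 / (2 * γ) - L / 2) * ‖w - pf s‖ ^ 2 : ℝ) : EReal) ≤
        g w + (quadModel f γ (pf s) w : EReal) := by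
    rw [add_comm (f w : EReal), add_assoc, ← EReal.coe_add]
    exact add_le_add le_rfl (EReal.coe_le_coe_iff.2 (add_sq_norm_le_quadModel hf hLip γ (pf s) w))
  have hle (s) : ⨅ x, (f x : EReal) + g x ≤ drEnvelope f g γ pf s :=
    le_iInf fun w => iInf_le_of_le w ((le_add_of_nonneg_right (by positivity)).trans (hmodel s w))
  have hsec (x) : drEnvelope f g γ pf (x + γ • gradient f x) ≤ (f x : EReal) + g x :=
    iInf_le_of_le x (by rw [hpf_inv, quadModel_self, add_comm])
  have hbot : ⨅ x, (f x : EReal) + g x ≠ ⊥ := by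
    obtain ⟨x₀, hx₀⟩ := hargmin
    exact ne_bot_of_le_ne_bot (EReal.add_ne_bot_iff.2 ⟨EReal.coe_ne_bot _, hgbot x₀⟩)
      (le_iInf fun y => hx₀ (mem_univ y))
  have hlsc : LowerSemicontinuous fun x => (f x : EReal) + g x :=
    (continuous_coe_real_ereal.comp hC1.continuous).lowerSemicontinuous.add' hglsc fun x =>
      EReal.continuousAt_add (Or.inl (EReal.coe_ne_top _)) (Or.inl (EReal.coe_ne_bot _))
  refine iInf_eq_iInf_and_setOf_isMinOn_eq_image hpf_inv hle hsec fun s hs => ?_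
  exact (hlsc.lowerSemicontinuousAt (pf s)).le_of_iInf_add_sq_norm_le hμ
    (ne_bot_of_le_ne_bot hbot (hle s)) (fun w => (hs (mem_univ _)).trans (hsec w))
    (iInf_mono (hmodel s))

/-- For `f` `L`-smooth and `g` proper lsc with `argmin(f+g) ≠ ∅` and `γ < 1/L`,
`inf (f+g) = inf φ_γ^{DR}` and `argmin (f+g) = prox_{γf}(argmin φ_γ^{DR})`, where
`φ_γ^{DR}(s) = min_w { g(w) + f(u) + ⟪∇f(u), w - u⟫ + (1/(2γ))‖w - u‖² }`,
`u = prox_{γf}(s)`. -/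
theorem DRE_inf_and_argmin_equiv {n : ℕ} (f : EuclideanSpace ℝ (Fin n) → ℝ)
    (g : EuclideanSpace ℝ (Fin n) → EReal) (L γ : ℝ) (hL : 0 < L)
    (hC1 : ContDiff ℝ 1 f)
    (hLip : ∀ x y, ‖gradient f x - gradient f y‖ ≤ L * ‖x - y‖)
    (hgproper : ∃ x, g x ≠ ⊤) (hgbot : ∀ x, g x ≠ ⊥) (hglsc : LowerSemicontinuous g)
    (hγ0 : 0 < γ) (hγ : γ < 1 / L)
    (hargmin : {x | IsMinOn (fun x => ((f x : ℝ) : EReal) + g x) Set.univ x}.Nonempty)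
    (pf : EuclideanSpace ℝ (Fin n) → EuclideanSpace ℝ (Fin n))
    (hpf : ∀ s, IsMinOn (fun w => f w + 1 / (2 * γ) * ‖w - s‖ ^ 2) Set.univ (pf s)) :
    (⨅ x, (((f x : ℝ) : EReal) + g x)) =
      (⨅ s, ⨅ w, (g w + ((f (pf s) + (inner ℝ (gradient f (pf s)) (w - pf s) : ℝ)
        + 1 / (2 * γ) * ‖w - pf s‖ ^ 2 : ℝ) : EReal))) ∧
    {x | IsMinOn (fun x => ((f x : ℝ) : EReal) + g x) Set.univ x} =
      pf '' {s | IsMinOn (fun s => ⨅ w, (g w + ((f (pf s)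
        + (inner ℝ (gradient f (pf s)) (w - pf s) : ℝ)
        + 1 / (2 * γ) * ‖w - pf s‖ ^ 2 : ℝ) : EReal))) Set.univ s} :=
  DRE_inf_and_argmin_equiv_general f g L γ hL hC1 hLip hgbot hglsc hγ0 hγ hargmin pf hpf
end

section
/- Let h : ℝⁿ → ℝ ∪ {∞} be proper, lsc, and σ-strongly convex, and let C ∈ ℝ^{p×n}. Then the image function (Ch)(s) := inf{ h(x) : Cx = s } is (σ/‖C‖²)-strongly convex. -/
/-!
If `C x₁ = s₁` and `C x₂ = s₂`, then `‖s₁ - s₂‖ ≤ ‖C‖ ‖x₁ - x₂‖`, so the strong convexity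
inequality of `h` at `x₁, x₂` bounds the image function at `a s₁ + b s₂` with the modulus
`σ / ‖C‖²`; taking infima over the two fibres gives the claim. That last step breaks down when a
fibre infimum is `⊥`, and this is excluded because `h` is bounded below: lower semicontinuity
bounds `h` below on a ball around a point of its domain, and strong convexity forces quadratic
growth away from that ball.
-/

variable {E F : Type*} [SeminormedAddCommGroup E] [NormedSpace ℝ E]
  [SeminormedAddCommGroup F] [NormedSpace ℝ F]

/-- Secant form of `σ`-strong convexity; unlike convexity of `h - σ/2 ‖·‖²`, it involves no
subtraction in `EReal`. -/
def StrongConvexEReal (σ : ℝ) (h : E → EReal) : Prop :=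
  ∀ (x y : E) (a b : ℝ), 0 ≤ a → 0 ≤ b → a + b = 1 →
    h (a • x + b • y) + ((σ / 2 * (a * b) * ‖x - y‖ ^ 2 : ℝ) : EReal)
      ≤ ((a : ℝ) : EReal) * h x + ((b : ℝ) : EReal) * h y

noncomputable def imageFunction (C : E →L[ℝ] F) (h : E → EReal) (s : F) : EReal :=
  ⨅ x ∈ {x | C x = s}, h x

theorem strongConvexEReal_of_forall_pos {σ : ℝ} {h : E → EReal}
    (hh : ∀ (x y : E) (a b : ℝ), 0 < a → 0 < b → a + b = 1 →
      h (a • x + b • y) + ((σ / 2 * (a * b) * ‖x - y‖ ^ 2 : ℝ) : EReal)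
        ≤ ((a : ℝ) : EReal) * h x + ((b : ℝ) : EReal) * h y) :
    StrongConvexEReal σ h := by
  intro x y a b ha hb hab
  rcases ha.eq_or_lt with rfl | ha
  · obtain rfl : b = 1 := by linarith
    simp
  rcases hb.eq_or_lt with rfl | hb
  · obtain rfl : a = 1 := by linarith
    simp
  exact hh x y a b ha hb hab

theorem EReal.le_coe_mul_add_coe_mul_of_forall_gt {c A B : EReal} {a b : ℝ} (ha : 0 < a)
    (hb : 0 < b) (hA : A ≠ ⊥) (hB : B ≠ ⊥)
    (h : ∀ α β : ℝ, A < α → B < β → c ≤ ((a * α + b * β : ℝ) : EReal)) :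
    c ≤ (a : EReal) * A + (b : EReal) * B := by
  induction A using EReal.rec with
  | bot => exact absurd rfl hA
  | top =>
    have hbB : (b : EReal) * B ≠ ⊥ := (EReal.mul_ne_bot _ _).2
      ⟨.inl (EReal.coe_ne_bot b), .inr hB, .inl (EReal.coe_ne_top b), .inl (mod_cast hb.le)⟩
    simp [EReal.coe_mul_top_of_pos ha, EReal.top_add_of_ne_bot hbB]
  | coe A =>
  induction B using EReal.rec with
  | bot => exact absurd rfl hB
  | top => simp [EReal.coe_mul_top_of_pos hb, EReal.add_top_of_ne_bot, ← EReal.coe_mul]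
  | coe B =>
  rw [← EReal.coe_mul, ← EReal.coe_mul, ← EReal.coe_add, ← EReal.le_of_forall_lt_iff_le]
  intro z hz
  have hz : a * A + b * B < z := mod_cast hz
  set ε := (z - (a * A + b * B)) / (a + b)
  have hε : 0 < ε := by positivity
  convert h (A + ε) (B + ε) (mod_cast lt_add_of_pos_right A hε)
    (mod_cast lt_add_of_pos_right B hε) using 2
  simp only [ε]
  field_simp
  ring

theorem ContinuousLinearMap.div_opNorm_sq_mul_norm_apply_sq_le (C : E →L[ℝ] F) {σ : ℝ}
    (hσ : 0 ≤ σ) (v : E) : σ / ‖C‖ ^ 2 * ‖C v‖ ^ 2 ≤ σ * ‖v‖ ^ 2 := by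
  rcases (norm_nonneg C).eq_or_lt with hC | hC
  · rw [← hC]
    simp only [ne_eq, OfNat.ofNat_ne_zero, not_false_eq_true, zero_pow, div_zero, zero_mul]
    positivity
  calc σ / ‖C‖ ^ 2 * ‖C v‖ ^ 2 ≤ σ / ‖C‖ ^ 2 * (‖C‖ * ‖v‖) ^ 2 := by
        gcongr
        exact C.le_opNorm v
    _ = σ * ‖v‖ ^ 2 := by field_simp

theorem StrongConvexEReal.exists_forall_coe_le {σ : ℝ} {h : E → EReal}
    (hh : StrongConvexEReal σ h) (hσ : 0 < σ) (hproper : ∃ x, h x ≠ ⊤) (hbot : ∀ x, h x ≠ ⊥)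
    (hlsc : LowerSemicontinuous h) : ∃ m : ℝ, ∀ y, (m : EReal) ≤ h y := by
  obtain ⟨x₀, hx₀⟩ := hproper
  obtain ⟨c₀, hc₀⟩ : ∃ c : ℝ, h x₀ = c := ⟨_, (EReal.coe_toReal hx₀ (hbot x₀)).symm⟩
  obtain ⟨δ, hδ, hball⟩ : ∃ δ > 0, ∀ z, dist z x₀ < δ → ((c₀ - 1 : ℝ) : EReal) < h z :=
    Metric.eventually_nhds_iff.1 (hlsc x₀ _ (show ((c₀ - 1 : ℝ) : EReal) < h x₀ by
      rw [hc₀]; exact_mod_cast sub_one_lt c₀))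
  refine ⟨min (c₀ - 1) (c₀ - 4 / (σ * δ ^ 2)), fun y => ?_⟩
  rcases eq_or_ne (h y) ⊤ with hy | hy
  · simp [hy]
  obtain ⟨w, hw⟩ : ∃ w : ℝ, h y = w := ⟨_, (EReal.coe_toReal hy (hbot y)).symm⟩
  rw [hw, EReal.coe_le_coe_iff]
  set d := dist y x₀
  rcases lt_or_ge d δ with hnear | hfar
  · exact (min_le_left _ _).trans (EReal.coe_lt_coe_iff.1 (hw ▸ hball y hnear)).le
  refine (min_le_right _ _).trans ?_
  -- `t` puts the point `(1 - t) • x₀ + t • y` at distance `δ / 2` from `x₀`.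
  set t := δ / (2 * d)
  have hd : 0 < d := hδ.trans_le hfar
  have ht : 0 < t := by positivity
  have ht_half : t ≤ 1 / 2 := by
    rw [div_le_div_iff₀ (by positivity) two_pos]; linarith
  have htd : t * d = δ / 2 := by simp only [t]; field_simp
  have hz : dist ((1 - t) • x₀ + t • y) x₀ < δ := by
    rw [dist_eq_norm, show (1 - t) • x₀ + t • y - x₀ = t • (y - x₀) by module, norm_smul,
      Real.norm_of_nonneg ht.le, ← dist_eq_norm, htd]
    linarith
  have hsecant : c₀ - 1 + σ / 2 * ((1 - t) * t) * d ^ 2 < (1 - t) * c₀ + t * w := by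
    have := (EReal.add_lt_add_right_coe (hball _ hz) _).trans_le
      (hh x₀ y (1 - t) t (by linarith) ht.le (by ring))
    rw [hc₀, hw, norm_sub_rev, ← dist_eq_norm] at this
    exact_mod_cast this
  have amgm : 2 * d / δ ≤ σ * d ^ 2 / 4 + 4 / (σ * δ ^ 2) := by
    rw [div_add_div _ _ (by norm_num) (by positivity), div_le_div_iff₀ hδ (by positivity)]
    nlinarith [sq_nonneg (σ * δ * d - 4)]
  have hlinear : c₀ - 2 * d / δ + σ * d ^ 2 / 4 ≤ w := by
    have hinv : t * (2 * d / δ) = 1 := by simp only [t]; field_simp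
    refine le_of_mul_le_mul_left ?_ ht
    nlinarith [mul_le_mul_of_nonneg_right ht_half (by positivity : 0 ≤ σ * t * d ^ 2)]
  linarith

theorem StrongConvexEReal.image {σ : ℝ} {h : E → EReal} (hh : StrongConvexEReal σ h)
    (hσ : 0 ≤ σ) (hbdd : ∃ m : ℝ, ∀ x, (m : EReal) ≤ h x) (C : E →L[ℝ] F) :
    StrongConvexEReal (σ / ‖C‖ ^ 2) (imageFunction C h) := by
  refine strongConvexEReal_of_forall_pos fun s₁ s₂ a b ha hb hab => ?_
  obtain ⟨m, hm⟩ := hbdd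
  have hne_bot (s : F) : imageFunction C h s ≠ ⊥ :=
    ne_bot_of_le_ne_bot (EReal.coe_ne_bot m) (le_iInf₂ fun x _ => hm x)
  have hfibers (x₁ x₂ : E) : imageFunction C h (a • C x₁ + b • C x₂)
      + ((σ / ‖C‖ ^ 2 / 2 * (a * b) * ‖C x₁ - C x₂‖ ^ 2 : ℝ) : EReal)
        ≤ (a : EReal) * h x₁ + (b : EReal) * h x₂ := by
    refine le_trans (add_le_add (iInf₂_le (a • x₁ + b • x₂) (by simp)) ?_)
      (hh x₁ x₂ a b ha.le hb.le hab)
    rw [EReal.coe_le_coe_iff, ← map_sub]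
    calc σ / ‖C‖ ^ 2 / 2 * (a * b) * ‖C (x₁ - x₂)‖ ^ 2
        = a * b / 2 * (σ / ‖C‖ ^ 2 * ‖C (x₁ - x₂)‖ ^ 2) := by ring
      _ ≤ a * b / 2 * (σ * ‖x₁ - x₂‖ ^ 2) :=
        mul_le_mul_of_nonneg_left (C.div_opNorm_sq_mul_norm_apply_sq_le hσ _) (by positivity)
      _ = σ / 2 * (a * b) * ‖x₁ - x₂‖ ^ 2 := by ring
  refine EReal.le_coe_mul_add_coe_mul_of_forall_gt ha hb (hne_bot s₁) (hne_bot s₂)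
    fun α β hα hβ => ?_
  obtain ⟨x₁, rfl : C x₁ = s₁, hx₁⟩ := lt_biInf_iff.1 hα
  obtain ⟨x₂, rfl : C x₂ = s₂, hx₂⟩ := lt_biInf_iff.1 hβ
  calc _ ≤ (a : EReal) * h x₁ + (b : EReal) * h x₂ := hfibers x₁ x₂
    _ ≤ (a : EReal) * α + (b : EReal) * β := by gcongr
    _ = ((a * α + b * β : ℝ) : EReal) := by push_cast; rfl

/-- if `h : ℝⁿ → ℝ ∪ {∞}` is proper, lsc and `σ`-strongly convex and
`C : ℝⁿ → ℝᵖ` is linear, then the image function `(Ch)(s) = inf {h x : Cx = s}` is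
`(σ/‖C‖²)`-strongly convex (strong convexity expressed through the standard secant
inequality, valid also for extended-real-valued functions). -/
theorem image_function_strongly_convex {n p : ℕ}
    (h : EuclideanSpace ℝ (Fin n) → EReal)
    (C : EuclideanSpace ℝ (Fin n) →L[ℝ] EuclideanSpace ℝ (Fin p)) (σ : ℝ) (hσ : 0 < σ)
    (hproper : ∃ x, h x ≠ ⊤) (hbot : ∀ x, h x ≠ ⊥) (hlsc : LowerSemicontinuous h)
    (hstrconv : ∀ (x y : EuclideanSpace ℝ (Fin n)) (a b : ℝ), 0 ≤ a → 0 ≤ b → a + b = 1 →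
      h (a • x + b • y) + ((σ / 2 * (a * b) * ‖x - y‖ ^ 2 : ℝ) : EReal)
        ≤ ((a : ℝ) : EReal) * h x + ((b : ℝ) : EReal) * h y) :
    ∀ (s₁ s₂ : EuclideanSpace ℝ (Fin p)) (a b : ℝ), 0 ≤ a → 0 ≤ b → a + b = 1 →
      (⨅ x ∈ {x | C x = a • s₁ + b • s₂}, h x)
          + (((σ / ‖C‖ ^ 2) / 2 * (a * b) * ‖s₁ - s₂‖ ^ 2 : ℝ) : EReal)
        ≤ ((a : ℝ) : EReal) * (⨅ x ∈ {x | C x = s₁}, h x)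
          + ((b : ℝ) : EReal) * (⨅ x ∈ {x | C x = s₂}, h x) := by
  have hconv : StrongConvexEReal σ h := hstrconv
  exact hconv.image hσ.le (hconv.exists_forall_coe_le hσ hproper hbot hlsc) C
end
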